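/- arXiv:1702.03379 — 4 statements merged into one kernel-verified Lean document; each statement's English description precedes it below -/
import Mathlib

section
/- For every real x with 1/2 ≤ x ≤ 1, it holds that 1/2 ≤ x·(−0.8099868542·x + 1.787727479)² < 3/2. -/
/-!
Write `f(x) = x (αx + β)²` with `α < 0`. Up to the factor `-1/(2α)` this is the product
`(-2αx)(αx + β)(αx + β)` of three nonnegative numbers with constant sum `2β`, so AM-GM bounds it
by `-4β³/(27α) ≈ 1.045`. Its second derivative `2α(3αx + 2β)` is nonpositive for
`x ≤ -2β/(3α) ≈ 1.47`, so on `[1/2, 1]` the concave `f` is at least `min (f (1/2)) (f 1) ≈ 0.956`.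
-/

open Set

section MulLinearSq

variable {α β : ℝ}

theorem concaveOn_mul_linear_sq (hα : α < 0) :
    ConcaveOn ℝ (Iic (-(2 * β) / (3 * α))) (fun x => x * (α * x + β) ^ 2) := by
  refine ⟨convex_Iic _, fun x hx y hy a b ha hb hab => ?_⟩
  have hx' : 0 ≤ 3 * α * x + 2 * β := by
    rw [mem_Iic, le_div_iff_of_neg (by linarith)] at hx; linarith
  have hy' : 0 ≤ 3 * α * y + 2 * β := by
    rw [mem_Iic, le_div_iff_of_neg (by linarith)] at hy; linarith
  obtain rfl : b = 1 - a := by linarith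
  -- The Jensen gap of the cubic is `-a b (x - y)² α (2β + α((1 + a)x + (1 + b)y))`.
  have hgap : 0 ≤ -α * (2 * β + α * ((1 + a) * x + (2 - a) * y)) := by
    nlinarith [mul_nonneg ha hx', mul_nonneg hb hy']
  simp only [smul_eq_mul]
  nlinarith [mul_nonneg (mul_nonneg (mul_nonneg ha hb) (sq_nonneg (x - y))) hgap]

theorem mul_linear_sq_le {x : ℝ} (hα : α < 0) (hx : 0 ≤ x) (hlin : 0 ≤ α * x + β) :
    x * (α * x + β) ^ 2 ≤ -(4 * β ^ 3) / (27 * α) := by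
  rw [le_div_iff_of_neg (by linarith)]
  have hcofactor : 0 ≤ 3 * α * x + 4 * β := by nlinarith
  -- `27 α x (αx + β)² + 4β³ = (3αx + β)² (3αx + 4β)`: a double root at the critical point.
  nlinarith [mul_nonneg (sq_nonneg (3 * α * x + β)) hcofactor]

end MulLinearSq

/-- The linear initial approximation `b₀' = α·x + β` of `1/√x` used in the square-root
protocol satisfies the Goldschmidt convergence condition `1/2 ≤ x·(b₀')² < 3/2` on the
normalized range `1/2 ≤ x ≤ 1`. -/
theorem goldschmidt_initial_approx_in_range (x : ℝ) (h1 : 1 / 2 ≤ x) (h2 : x ≤ 1) :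
    1 / 2 ≤ x * (-0.8099868542 * x + 1.787727479) ^ 2 ∧
      x * (-0.8099868542 * x + 1.787727479) ^ 2 < 3 / 2 := by
  have hα : (-0.8099868542 : ℝ) < 0 := by norm_num
  constructor
  · have hmin := (concaveOn_mul_linear_sq (β := 1.787727479) hα).min_le_of_mem_Icc
      (x := 1 / 2) (y := 1) (by norm_num) (by norm_num) ⟨h1, h2⟩
    exact le_trans (by norm_num) hmin
  · calc x * (-0.8099868542 * x + 1.787727479) ^ 2
        ≤ -(4 * 1.787727479 ^ 3) / (27 * -0.8099868542) :=
          mul_linear_sq_le hα (by linarith) (by linarith)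
      _ < 3 / 2 := by norm_num
end

section
/- For every real x with 1/2 ≤ x ≤ 1, it holds that | √x·(−0.8099868542·x + 1.787727479) − 1 | ≤ 2^(−5.4). -/
/-!
With `t = √x` the relative error becomes the cubic `t ↦ t (β + α t²) - 1` on `[1/√2, 1]`.
The coefficients are (close to) the minimax choice: the cubic equioscillates, taking the
value `≈ -0.02226` at both endpoints and `≈ +0.02226` at its critical point
`√(-β / (3α)) ≈ 0.8577`, so its absolute value stays below `0.023 < 2^(-5.4) ≈ 0.0237`.
-/

namespace GoldschmidtInitialApprox

def cubicError (t : ℝ) : ℝ := t * (-0.8099868542 * t ^ 2 + 1.787727479) - 1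

lemma cubicError_le {t : ℝ} (ht : 0 ≤ t) : cubicError t ≤ 0.023 := by
  unfold cubicError
  -- `0.023 - cubicError t` exceeds `-α (t - c)² (t + 2c)` by a tiny positive constant
  -- (`c` the critical point).
  nlinarith [mul_nonneg (sq_nonneg (t - 0.8577314)) (by linarith : (0 : ℝ) ≤ t + 1.7154628)]

lemma neg_le_cubicError {t : ℝ} (ht0 : 0 ≤ t) (ht : 1 / 2 ≤ t ^ 2) (ht1 : t ≤ 1) :
    -0.023 ≤ cubicError t := by
  unfold cubicError
  nlinarith [mul_nonneg (mul_nonneg (by linarith : (0 : ℝ) ≤ t ^ 2 - 1 / 2)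
    (by linarith : (0 : ℝ) ≤ 1 - t)) ht0]

lemma abs_cubicError_le {t : ℝ} (ht0 : 0 ≤ t) (ht : 1 / 2 ≤ t ^ 2) (ht1 : t ≤ 1) :
    |cubicError t| ≤ 0.023 :=
  abs_le.2 ⟨neg_le_cubicError ht0 ht ht1, cubicError_le ht0⟩

lemma le_two_rpow_neg_five_point_four : (0.023 : ℝ) ≤ (2 : ℝ) ^ (-(5.4 : ℝ)) := by
  have hpow : ((2 : ℝ) ^ (-(5.4 : ℝ))) ^ 5 = 2 ^ (-27 : ℝ) := by
    rw [← Real.rpow_natCast, ← Real.rpow_mul zero_le_two]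
    norm_num
  rw [← pow_le_pow_iff_left₀ (by norm_num) (by positivity) (by norm_num : 5 ≠ 0), hpow]
  norm_num [Real.rpow_neg, Real.rpow_natCast]

end GoldschmidtInitialApprox

/-- The linear initial approximation `α·x + β` of `1/√x` used in the square-root protocol
has relative error at most `2^(−5.4)` on the normalized range `1/2 ≤ x ≤ 1`. -/
theorem goldschmidt_initial_approx_precision (x : ℝ) (h1 : 1 / 2 ≤ x) (h2 : x ≤ 1) :
    |Real.sqrt x * (-0.8099868542 * x + 1.787727479) - 1| ≤ (2 : ℝ) ^ (-(5.4 : ℝ)) := by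
  have hsq : Real.sqrt x ^ 2 = x := Real.sq_sqrt (by linarith)
  have hbound := GoldschmidtInitialApprox.abs_cubicError_le (Real.sqrt_nonneg x)
    (by rwa [hsq]) (Real.sqrt_le_one.mpr h2)
  rw [GoldschmidtInitialApprox.cubicError, hsq] at hbound
  exact hbound.trans GoldschmidtInitialApprox.le_two_rpow_neg_five_point_four
end

section
/- Let u ∈ ℝ and set u' = u·(3/2 − u)². If d = 1 − 2u and d' = 1 − 2u', then d' = d²·(3 + d)/4. In particular, if |d| ≤ 1/2 then |d'| ≤ (7/8)·d². -/
/-! `u = 1/2` is a superattracting fixed point of `u ↦ u·(3/2 − u)²` (the derivative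
`(3/2 − u)(3/2 − 3u)` vanishes there), so in the coordinate `d = 1 − 2u` the map is a cubic with
a double root at `0`; on `|d| ≤ 1/2` its remaining factor `(3 + d)/4` is at most `7/8`. -/

theorem one_sub_two_mul_goldschmidt_step (u : ℝ) :
    1 - 2 * (u * (3 / 2 - u) ^ 2) = (1 - 2 * u) ^ 2 * (3 + (1 - 2 * u)) / 4 := by
  ring

theorem abs_sq_mul_three_add_div_four_le {d : ℝ} (hd : |d| ≤ 1 / 2) :
    |d ^ 2 * (3 + d) / 4| ≤ 7 / 8 * d ^ 2 := by
  have h3d : |3 + d| ≤ 7 / 2 := by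
    rw [abs_le] at hd ⊢
    constructor <;> linarith
  calc |d ^ 2 * (3 + d) / 4| = d ^ 2 * |3 + d| / 4 := by
        rw [abs_div, abs_mul, abs_pow, sq_abs, abs_of_pos (four_pos : (0 : ℝ) < 4)]
    _ ≤ d ^ 2 * (7 / 2) / 4 := by gcongr
    _ = 7 / 8 * d ^ 2 := by ring

/-- Quadratic contraction of Goldschmidt's square-root iteration: if `u' = u·(3/2 − u)²`,
`d = 1 − 2u` and `d' = 1 − 2u'`, then `d' = d²·(3 + d)/4`; in particular `|d| ≤ 1/2`
implies `|d'| ≤ (7/8)·d²`. -/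
theorem goldschmidt_contraction (u u' d d' : ℝ)
    (hu' : u' = u * (3 / 2 - u) ^ 2) (hd : d = 1 - 2 * u) (hd' : d' = 1 - 2 * u') :
    d' = d ^ 2 * (3 + d) / 4 ∧ (|d| ≤ 1 / 2 → |d'| ≤ 7 / 8 * d ^ 2) := by
  have hstep : d' = d ^ 2 * (3 + d) / 4 := by
    rw [hd', hu', hd, one_sub_two_mul_goldschmidt_step]
  exact ⟨hstep, fun hsmall => hstep ▸ abs_sq_mul_three_add_div_four_le hsmall⟩
end

section
/- Let a > 0 and b₀ > 0 be reals with 1/2 ≤ a·b₀² < 3/2. Define sequences (g_n), (h_n) by g₀ = a·b₀, h₀ = b₀/2, and g_{n+1} = g_n·(3/2 − g_n·h_n), h_{n+1} = h_n·(3/2 − g_n·h_n). Then g_n = 2a·h_n for all n, the sequence g_n converges to √a, and the sequence h_n converges to 1/(2√a). -/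
open Filter Topology

/-!
The product `p_n = g_n h_n` satisfies `p_{n+1} = p_n (3/2 − p_n)²`, so the error `e_n = 1 − 2 p_n`
satisfies `e_{n+1} = e_n² (3 + e_n) / 4`. The hypothesis on `b₀` says `|e₀| ≤ 1/2`, and there this
map contracts by the factor `7/16`, so `p_n → 1/2`. The ratio `g_n / h_n = 2a` is invariant and
`g_n` stays positive, hence `g_n = √(2a p_n) → √a` and `h_n = g_n / (2a) → 1/(2√a)`.
-/

theorem abs_le_pow_mul_of_abs_succ_le {u : ℕ → ℝ} {c r : ℝ} (hc₀ : 0 ≤ c) (hc₁ : c ≤ 1)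
    (h₀ : |u 0| ≤ r) (hstep : ∀ n, |u n| ≤ r → |u (n + 1)| ≤ c * |u n|) (n : ℕ) :
    |u n| ≤ c ^ n * r := by
  induction n with
  | zero => simpa using h₀
  | succ n ih =>
    have hr : |u n| ≤ r :=
      ih.trans <| mul_le_of_le_one_left ((abs_nonneg _).trans h₀) (pow_le_one₀ hc₀ hc₁)
    calc |u (n + 1)| ≤ c * |u n| := hstep n hr
      _ ≤ c * (c ^ n * r) := by gcongr
      _ = c ^ (n + 1) * r := by ring

theorem abs_one_sub_two_mul_goldschmidt_step_le {p : ℝ} (hp : |1 - 2 * p| ≤ 1 / 2) :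
    |1 - 2 * (p * (3 / 2 - p) ^ 2)| ≤ 7 / 16 * |1 - 2 * p| := by
  set e := 1 - 2 * p
  have herr : 1 - 2 * (p * (3 / 2 - p) ^ 2) = e ^ 2 * (3 + e) / 4 := by simp only [e]; ring
  obtain ⟨he₁, he₂⟩ := abs_le.mp hp
  have h3e : 0 < 3 + e := by linarith
  rw [herr, abs_of_nonneg (by positivity)]
  calc e ^ 2 * (3 + e) / 4 = |e| * (3 + e) / 4 * |e| := by rw [← sq_abs]; ring
    _ ≤ 7 / 16 * |e| := mul_le_mul_of_nonneg_right (by nlinarith [abs_nonneg e]) (abs_nonneg e)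

theorem Real.tendsto_sqrt_of_tendsto_sq {α : Type*} {l : Filter α} {u : α → ℝ} {a : ℝ}
    (hu : ∀ x, 0 ≤ u x) (hsq : Tendsto (fun x ↦ u x ^ 2) l (𝓝 a)) :
    Tendsto u l (𝓝 (Real.sqrt a)) :=
  ((Real.continuous_sqrt.tendsto a).comp hsq).congr fun x ↦ Real.sqrt_sq (hu x)

theorem goldschmidt_mul_succ {g h : ℕ → ℝ} {n : ℕ}
    (hg : g (n + 1) = g n * (3 / 2 - g n * h n)) (hh : h (n + 1) = h n * (3 / 2 - g n * h n)) :
    g (n + 1) * h (n + 1) = g n * h n * (3 / 2 - g n * h n) ^ 2 := by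
  rw [hg, hh]; ring

theorem goldschmidt_eq_mul {g h : ℕ → ℝ} {c : ℝ} (h₀ : g 0 = c * h 0)
    (hgs : ∀ n, g (n + 1) = g n * (3 / 2 - g n * h n))
    (hhs : ∀ n, h (n + 1) = h n * (3 / 2 - g n * h n)) (n : ℕ) : g n = c * h n := by
  induction n with
  | zero => exact h₀
  | succ n ih => rw [hgs, hhs, ih]; ring

theorem goldschmidt_pos {g h : ℕ → ℝ} (h₀ : 0 < g 0)
    (hgs : ∀ n, g (n + 1) = g n * (3 / 2 - g n * h n)) (hlt : ∀ n, g n * h n < 3 / 2) (n : ℕ) :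
    0 < g n := by
  induction n with
  | zero => exact h₀
  | succ n ih => rw [hgs]; exact mul_pos ih (sub_pos.mpr (hlt n))

/-- Convergence of Goldschmidt's square-root iteration: with `g₀ = a·b₀`, `h₀ = b₀/2`,
`g_{n+1} = g_n·(3/2 − g_n·h_n)` and `h_{n+1} = h_n·(3/2 − g_n·h_n)`, and an initial
approximation satisfying `1/2 ≤ a·b₀² < 3/2`, we have `g_n = 2a·h_n` for all `n`,
`g_n → √a`, and `h_n → 1/(2√a)`. -/
theorem goldschmidt_sqrt_convergence (a b₀ : ℝ) (ha : 0 < a) (hb₀ : 0 < b₀)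
    (hinit₁ : 1 / 2 ≤ a * b₀ ^ 2) (hinit₂ : a * b₀ ^ 2 < 3 / 2)
    (g h : ℕ → ℝ) (hg0 : g 0 = a * b₀) (hh0 : h 0 = b₀ / 2)
    (hgs : ∀ n, g (n + 1) = g n * (3 / 2 - g n * h n))
    (hhs : ∀ n, h (n + 1) = h n * (3 / 2 - g n * h n)) :
    (∀ n, g n = 2 * a * h n) ∧
      Tendsto g atTop (nhds (Real.sqrt a)) ∧
      Tendsto h atTop (nhds (1 / (2 * Real.sqrt a))) := by
  set e : ℕ → ℝ := fun n ↦ 1 - 2 * (g n * h n)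
  have he₀ : |e 0| ≤ 1 / 2 := by
    simp only [e, hg0, hh0, abs_le]; constructor <;> nlinarith
  have hbound : ∀ n, |e n| ≤ (7 / 16) ^ n * (1 / 2) :=
    abs_le_pow_mul_of_abs_succ_le (by norm_num) (by norm_num) he₀ fun n hn ↦ by
      simpa only [e, goldschmidt_mul_succ (hgs n) (hhs n)] using
        abs_one_sub_two_mul_goldschmidt_step_le hn
  have he : Tendsto e atTop (𝓝 0) :=
    squeeze_zero_norm hbound <| by
      simpa using (tendsto_pow_atTop_nhds_zero_of_lt_one (by norm_num) (by norm_num)).mul_const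
        (1 / 2 : ℝ)
  have hrel : ∀ n, g n = 2 * a * h n := goldschmidt_eq_mul (by rw [hg0, hh0]; ring) hgs hhs
  have hsmall : ∀ n, |e n| ≤ 1 / 2 := fun n ↦ (hbound n).trans <|
    mul_le_of_le_one_left (by norm_num) (pow_le_one₀ (by norm_num) (by norm_num))
  have hpos : ∀ n, 0 < g n := goldschmidt_pos (by rw [hg0]; positivity) hgs fun n ↦ by
    have := (abs_le.mp (hsmall n)).1
    simp only [e] at this; linarith
  have hg : Tendsto g atTop (𝓝 (Real.sqrt a)) := by
    refine Real.tendsto_sqrt_of_tendsto_sq (fun n ↦ (hpos n).le) ?_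
    have hsq : ∀ n, a * (1 - e n) = g n ^ 2 := fun n ↦ by simp only [e]; rw [hrel n]; ring
    simpa only [hsq, sub_zero, mul_one] using
      ((tendsto_const_nhds (x := (1 : ℝ))).sub he).const_mul a
  refine ⟨hrel, hg, ?_⟩
  have hsqrt : Real.sqrt a / (2 * a) = 1 / (2 * Real.sqrt a) := by
    rw [mul_comm 2 a, ← div_div, Real.sqrt_div_self', div_div, mul_comm]
  rw [← hsqrt]
  exact (hg.div_const (2 * a)).congr fun n ↦ by rw [hrel n]; field_simp
end
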